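/- arXiv:1501.06060 — 5 statements merged into one kernel-verified Lean document; each statement's English description precedes it below -/
import Mathlib

section
/- Let K ≥ 1 and D ≥ 1 be integers, let g_1, …, g_K : ℝ^D → ℝ be nonnegative measurable functions with ∫ g_k = 1 for each k, and let ĝ_1, …, ĝ_K : ℝ^D → ℝ be nonnegative integrable functions. Let f̂ : ℝ^D → {1,…,K} be any measurable classifier satisfying ĝ_{f̂(x)}(x) = max_{1≤k≤K} ĝ_k(x) for every x. Then 0 ≤ R(f̂) − R* ≤ (1/K) · Σ_{k=1}^K ∫_{ℝ^D} |g_k(x) − ĝ_k(x)| dx. -/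
open MeasureTheory Filter

/-- excess-risk bound for the plug-in classifier with uniform priors:
`0 ≤ R(f̂) − R* ≤ (1/K) · Σ_k ∫ |g_k − ĝ_k|`. -/
theorem nss_excess_risk_bound {K D : ℕ} (hK : 1 ≤ K) (hD : 1 ≤ D)
    (g ghat : Fin K → EuclideanSpace ℝ (Fin D) → ℝ)
    (hg_meas : ∀ k, Measurable (g k))
    (hg_nonneg : ∀ k x, 0 ≤ g k x)
    (hg_int : ∀ k, ∫ x, g k x = 1)
    (hghat_nonneg : ∀ k x, 0 ≤ ghat k x)
    (hghat_int : ∀ k, Integrable (ghat k))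
    (fhat : EuclideanSpace ℝ (Fin D) → Fin K)
    (hfhat_meas : Measurable fhat)
    (hfhat : ∀ x, ghat (fhat x) x = ⨆ k, ghat k x) :
    0 ≤ (1 - (1 / K : ℝ) * ∫ x, g (fhat x) x) -
        (1 - (1 / K : ℝ) * ∫ x, ⨆ k, g k x) ∧
    (1 - (1 / K : ℝ) * ∫ x, g (fhat x) x) -
        (1 - (1 / K : ℝ) * ∫ x, ⨆ k, g k x) ≤
      (1 / K : ℝ) * ∑ k, ∫ x, |g k x - ghat k x| := by
  have hKne : Nonempty (Fin K) := Fin.pos_iff_nonempty.mp hK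
  have hKpos : (0:ℝ) < K := by exact_mod_cast hK
  have h1K : (0:ℝ) ≤ 1 / K := by positivity
  have hginteg : ∀ k, Integrable (g k) := by
    intro k
    by_contra h
    have := hg_int k
    rw [integral_undef h] at this
    norm_num at this
  have hFmeas : Measurable fun x => g (fhat x) x := by
    have heq : (fun x => g (fhat x) x)
        = fun x => ∑ k, if fhat x = k then g k x else 0 := by
      funext x
      simp
    rw [heq]
    exact Finset.measurable_sum _ fun k _ =>
      Measurable.ite (hfhat_meas (measurableSet_singleton k)) (hg_meas k) measurable_const
  have hbdd : ∀ x, BddAbove (Set.range fun k => g k x) :=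
    fun x => Set.Finite.bddAbove (Set.finite_range _)
  have hsum_int : Integrable fun x => ∑ k, g k x :=
    integrable_finset_sum _ fun k _ => hginteg k
  have hF_le_sum : ∀ x, g (fhat x) x ≤ ∑ k, g k x := fun x =>
    Finset.single_le_sum (fun k _ => hg_nonneg k x) (Finset.mem_univ _)
  have hsum_nonneg : ∀ x, (0:ℝ) ≤ ∑ k, g k x :=
    fun x => Finset.sum_nonneg fun k _ => hg_nonneg k x
  have hFint : Integrable fun x => g (fhat x) x := by
    refine hsum_int.mono hFmeas.aestronglyMeasurable
      (Filter.Eventually.of_forall fun x => ?_)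
    rw [Real.norm_eq_abs, Real.norm_eq_abs, abs_of_nonneg (hg_nonneg _ x),
      abs_of_nonneg (hsum_nonneg x)]
    exact hF_le_sum x
  have hSmeas : Measurable fun x => ⨆ k, g k x := Measurable.iSup fun k => hg_meas k
  have hS_nonneg : ∀ x, (0:ℝ) ≤ ⨆ k, g k x := fun x =>
    le_trans (hg_nonneg (Classical.arbitrary _) x) (le_ciSup (hbdd x) _)
  have hS_le_sum : ∀ x, (⨆ k, g k x) ≤ ∑ k, g k x := fun x =>
    ciSup_le fun k => Finset.single_le_sum (fun k _ => hg_nonneg k x) (Finset.mem_univ k)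
  have hSint : Integrable fun x => ⨆ k, g k x := by
    refine hsum_int.mono hSmeas.aestronglyMeasurable
      (Filter.Eventually.of_forall fun x => ?_)
    rw [Real.norm_eq_abs, Real.norm_eq_abs, abs_of_nonneg (hS_nonneg x),
      abs_of_nonneg (hsum_nonneg x)]
    exact hS_le_sum x
  have hF_le_S : ∀ x, g (fhat x) x ≤ ⨆ k, g k x := fun x => le_ciSup (hbdd x) (fhat x)
  have h1 : ∫ x, g (fhat x) x ≤ ∫ x, ⨆ k, g k x := integral_mono hFint hSint hF_le_S
  have habsint : ∀ k, Integrable fun x => |g k x - ghat k x| :=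
    fun k => ((hginteg k).sub (hghat_int k)).abs
  have hpt : ∀ x, (⨆ k, g k x) - g (fhat x) x ≤ ∑ k, |g k x - ghat k x| := by
    intro x
    rw [sub_le_iff_le_add]
    apply ciSup_le
    intro j
    by_cases hj : j = fhat x
    · subst hj
      have : (0:ℝ) ≤ ∑ k, |g k x - ghat k x| :=
        Finset.sum_nonneg fun k _ => abs_nonneg _
      linarith
    · have hle : ghat j x ≤ ghat (fhat x) x := by
        rw [hfhat x]
        exact le_ciSup (f := fun k => ghat k x) (Set.Finite.bddAbove (Set.finite_range _)) j
      have h2 : |g j x - ghat j x| + |g (fhat x) x - ghat (fhat x) x|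
          ≤ ∑ k, |g k x - ghat k x| := by
        have hsub := Finset.sum_le_sum_of_subset_of_nonneg
          (Finset.subset_univ ({j, fhat x} : Finset (Fin K)))
          (fun k _ _ => abs_nonneg (g k x - ghat k x))
        rwa [Finset.sum_pair hj] at hsub
      have h3 : g j x - ghat j x ≤ |g j x - ghat j x| := le_abs_self _
      have h4 : ghat (fhat x) x - g (fhat x) x ≤ |g (fhat x) x - ghat (fhat x) x| := by
        rw [abs_sub_comm]; exact le_abs_self _
      linarith
  have hint2 : ∫ x, ((⨆ k, g k x) - g (fhat x) x) ≤ ∫ x, ∑ k, |g k x - ghat k x| :=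
    integral_mono (hSint.sub hFint) (integrable_finset_sum _ fun k _ => habsint k) hpt
  rw [integral_sub hSint hFint, integral_finset_sum _ (fun k _ => habsint k)] at hint2
  constructor
  · nlinarith [mul_le_mul_of_nonneg_left h1 h1K]
  · nlinarith [mul_le_mul_of_nonneg_left hint2 h1K]
end

section
/- Let K ≥ 1 and D ≥ 1 be integers, let g_1, …, g_K : ℝ^D → ℝ be nonnegative measurable functions with ∫ g_k = 1 for each k, let ĝ_1, …, ĝ_K : ℝ^D → ℝ be nonnegative integrable functions, and let f̂ : ℝ^D → {1,…,K} be a measurable classifier with ĝ_{f̂(x)}(x) = max_{1≤k≤K} ĝ_k(x) for every x. Then ∫_{ℝ^D} ( max_{1≤k≤K} g_k(x) − g_{f̂(x)}(x) ) dx ≤ Σ_{k=1}^K ∫_{ℝ^D} |g_k(x) − ĝ_k(x)| dx, i.e., R(f̂) − R* ≤ (1/K) Σ_{k=1}^K ∫ |g_k − ĝ_k|. -/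
open MeasureTheory Filter

/-- for the plug-in classifier `f̂`,
`∫ (max_k g_k − g_{f̂(x)}) dx ≤ Σ_k ∫ |g_k − ĝ_k|`, i.e.
`R(f̂) − R* ≤ (1/K) Σ_k ∫ |g_k − ĝ_k|`. -/
theorem plugin_excess_risk_upper_bound {K D : ℕ} (hK : 1 ≤ K) (hD : 1 ≤ D)
    (g ghat : Fin K → EuclideanSpace ℝ (Fin D) → ℝ)
    (hg_meas : ∀ k, Measurable (g k))
    (hg_nonneg : ∀ k x, 0 ≤ g k x)
    (hg_int : ∀ k, ∫ x, g k x = 1)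
    (hghat_nonneg : ∀ k x, 0 ≤ ghat k x)
    (hghat_int : ∀ k, Integrable (ghat k))
    (fhat : EuclideanSpace ℝ (Fin D) → Fin K)
    (hfhat_meas : Measurable fhat)
    (hfhat : ∀ x, ghat (fhat x) x = ⨆ k, ghat k x) :
    (∫ x, ((⨆ k, g k x) - g (fhat x) x) ≤ ∑ k, ∫ x, |g k x - ghat k x|) ∧
    ((1 - (1 / K : ℝ) * ∫ x, g (fhat x) x) -
        (1 - (1 / K : ℝ) * ∫ x, ⨆ k, g k x) ≤
      (1 / K : ℝ) * ∑ k, ∫ x, |g k x - ghat k x|) := by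
  have hKne : Nonempty (Fin K) := ⟨⟨0, hK⟩⟩
  -- each g k is integrable
  have hg_integrable : ∀ k, Integrable (g k) := by
    intro k
    by_contra h
    have hk := hg_int k
    rw [integral_undef h] at hk
    exact one_ne_zero hk.symm
  -- pointwise sup equals some max
  have hsup_eq : ∀ x, ∃ j : Fin K, (⨆ k, g k x) = g j x := by
    intro x
    obtain ⟨j, hj⟩ := Finite.exists_max (fun k => g k x)
    refine ⟨j, le_antisymm (ciSup_le hj) (le_ciSup (f := fun k => g k x) (Set.Finite.bddAbove (Set.finite_range _)) j)⟩
  -- pointwise bound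
  have hpt : ∀ x, (⨆ k, g k x) - g (fhat x) x ≤ ∑ k, |g k x - ghat k x| := by
    intro x
    obtain ⟨j, hj⟩ := hsup_eq x
    rw [hj]
    by_cases hjf : j = fhat x
    · rw [hjf, sub_self]
      exact Finset.sum_nonneg fun k _ => abs_nonneg _
    · have h1 : ghat j x ≤ ghat (fhat x) x := by
        rw [hfhat x]
        exact le_ciSup (f := fun k => ghat k x) (Set.Finite.bddAbove (Set.finite_range _)) j
      have h2 : g j x - g (fhat x) x ≤
          |g j x - ghat j x| + |g (fhat x) x - ghat (fhat x) x| := by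
        have := abs_sub_abs_le_abs_sub (g j x - ghat j x) (g (fhat x) x - ghat (fhat x) x)
        have ha := le_abs_self (g j x - ghat j x)
        have hb := neg_abs_le (g (fhat x) x - ghat (fhat x) x)
        linarith
      calc g j x - g (fhat x) x
          ≤ |g j x - ghat j x| + |g (fhat x) x - ghat (fhat x) x| := h2
        _ = ∑ k ∈ ({j, fhat x} : Finset (Fin K)), |g k x - ghat k x| := by
            rw [Finset.sum_pair hjf]
        _ ≤ ∑ k, |g k x - ghat k x| := by
            apply Finset.sum_le_sum_of_subset_of_nonneg (Finset.subset_univ _)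
            intro k _ _; exact abs_nonneg _
  -- measurability of x ↦ g (fhat x) x
  have hcomp_meas : Measurable fun x => g (fhat x) x := by
    have : (fun x => g (fhat x) x) =
        fun x => ∑ k : Fin K, if fhat x = k then g k x else 0 := by
      funext x
      rw [Finset.sum_eq_single (fhat x)]
      · simp
      · intro b _ hb; simp [Ne.symm hb]
      · simp
    rw [this]
    apply Finset.measurable_sum
    intro k _
    exact Measurable.ite (hfhat_meas (measurableSet_singleton k)) (hg_meas k) measurable_const
  have hsup_meas : Measurable fun x => ⨆ k, g k x :=
    Measurable.iSup hg_meas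
  -- integrability of sup
  have hsum_int : Integrable (fun x => ∑ k, g k x) :=
    integrable_finset_sum _ fun k _ => hg_integrable k
  have hsup_le_sum : ∀ x, |⨆ k, g k x| ≤ ∑ k, g k x := by
    intro x
    rw [abs_of_nonneg]
    · apply ciSup_le
      intro j
      exact Finset.single_le_sum (fun k _ => hg_nonneg k x) (Finset.mem_univ j)
    · obtain ⟨j, hj⟩ := hsup_eq x
      rw [hj]; exact hg_nonneg j x
  have hsup_int : Integrable (fun x => ⨆ k, g k x) :=
    Integrable.mono' hsum_int hsup_meas.aestronglyMeasurable
      (Filter.Eventually.of_forall hsup_le_sum)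
  have hcomp_le : ∀ x, |g (fhat x) x| ≤ ∑ k, g k x := by
    intro x
    rw [abs_of_nonneg (hg_nonneg _ x)]
    exact Finset.single_le_sum (fun k _ => hg_nonneg k x) (Finset.mem_univ (fhat x))
  have hcomp_int : Integrable (fun x => g (fhat x) x) :=
    Integrable.mono' hsum_int hcomp_meas.aestronglyMeasurable
      (Filter.Eventually.of_forall hcomp_le)
  have habs_int : ∀ k, Integrable (fun x => |g k x - ghat k x|) := fun k =>
    ((hg_integrable k).sub (hghat_int k)).abs
  -- main integral inequality
  have hmain : ∫ x, ((⨆ k, g k x) - g (fhat x) x) ≤ ∑ k, ∫ x, |g k x - ghat k x| := by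
    have h1 : ∫ x, ((⨆ k, g k x) - g (fhat x) x) ≤ ∫ x, ∑ k, |g k x - ghat k x| := by
      apply integral_mono (hsup_int.sub hcomp_int)
        (integrable_finset_sum _ fun k _ => habs_int k)
      exact hpt
    rwa [integral_finset_sum _ (fun k _ => habs_int k)] at h1
  refine ⟨hmain, ?_⟩
  have hsplit : ∫ x, ((⨆ k, g k x) - g (fhat x) x) =
      (∫ x, ⨆ k, g k x) - ∫ x, g (fhat x) x :=
    integral_sub hsup_int hcomp_int
  have hKpos : (0:ℝ) ≤ 1 / K := by positivity
  have := mul_le_mul_of_nonneg_left (hsplit ▸ hmain) hKpos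
  linarith [this]
end

section
/- Let K ≥ 1 and D ≥ 1 be integers and let g_1, …, g_K : ℝ^D → ℝ be nonnegative measurable functions with ∫ g_k = 1 for each k. For each n ∈ ℕ let ĝ_{1,n}, …, ĝ_{K,n} : ℝ^D → ℝ be nonnegative integrable functions and let f̂_n : ℝ^D → {1,…,K} be a measurable classifier with ĝ_{f̂_n(x),n}(x) = max_{1≤k≤K} ĝ_{k,n}(x) for every x. If for each k, ∫_{ℝ^D} |g_k(x) − ĝ_{k,n}(x)| dx → 0 as n → ∞, then R(f̂_n) → R* as n → ∞. -/
open MeasureTheory Filter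

/-- if the density estimates converge in L¹, i.e.
`∫ |g_k − ĝ_{k,n}| → 0` for each `k`, then the risk of the plug-in classifiers
converges to the Bayes risk: `R(f̂_n) → R*`. -/
theorem plugin_risk_tendsto_of_L1 {K D : ℕ} (hK : 1 ≤ K) (hD : 1 ≤ D)
    (g : Fin K → EuclideanSpace ℝ (Fin D) → ℝ)
    (hg_meas : ∀ k, Measurable (g k))
    (hg_nonneg : ∀ k x, 0 ≤ g k x)
    (hg_int : ∀ k, ∫ x, g k x = 1)
    (ghat : ℕ → Fin K → EuclideanSpace ℝ (Fin D) → ℝ)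
    (hghat_nonneg : ∀ n k x, 0 ≤ ghat n k x)
    (hghat_int : ∀ n k, Integrable (ghat n k))
    (fhat : ℕ → EuclideanSpace ℝ (Fin D) → Fin K)
    (hfhat_meas : ∀ n, Measurable (fhat n))
    (hfhat : ∀ n x, ghat n (fhat n x) x = ⨆ k, ghat n k x)
    (hL1 : ∀ k, Tendsto (fun n => ∫ x, |g k x - ghat n k x|) atTop (nhds 0)) :
    Tendsto (fun n => 1 - (1 / K : ℝ) * ∫ x, g (fhat n x) x) atTop
      (nhds (1 - (1 / K : ℝ) * ∫ x, ⨆ k, g k x)) := by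
  haveI : Nonempty (Fin K) := ⟨⟨0, hK⟩⟩
  -- integrability of the true densities
  have hg_int' : ∀ k, Integrable (g k) := by
    intro k
    by_contra h
    have := hg_int k
    rw [integral_undef h] at this
    norm_num at this
  set M : EuclideanSpace ℝ (Fin D) → ℝ := fun x => ⨆ k, g k x with hM_def
  have hbdd : ∀ x, BddAbove (Set.range fun k => g k x) :=
    fun x => Set.Finite.bddAbove (Set.finite_range _)
  have hM_le_sum : ∀ x, M x ≤ ∑ k, g k x := fun x =>
    ciSup_le fun j => Finset.single_le_sum (fun k _ => hg_nonneg k x) (Finset.mem_univ j)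
  have hM_nonneg : ∀ x, 0 ≤ M x := fun x =>
    (hg_nonneg (Classical.arbitrary _) x).trans (le_ciSup (hbdd x) _)
  have hM_meas : Measurable M := Measurable.iSup fun k => hg_meas k
  have hM_int : Integrable M := by
    refine (integrable_finset_sum Finset.univ (fun k _ => hg_int' k)).mono'
      hM_meas.aestronglyMeasurable (ae_of_all _ fun x => ?_)
    rw [Real.norm_eq_abs, abs_of_nonneg (hM_nonneg x)]
    exact hM_le_sum x
  -- integrability of plug-in selection
  have hφ_eq : ∀ n, (fun x => g (fhat n x) x) =
      fun x => ∑ k, Set.indicator {x | fhat n x = k} (g k) x := by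
    intro n
    funext x
    simp [Set.indicator_apply]
  have hφ_int : ∀ n, Integrable (fun x => g (fhat n x) x) := by
    intro n
    rw [hφ_eq n]
    refine integrable_finset_sum _ fun k _ => (hg_int' k).indicator ?_
    exact hfhat_meas n (measurableSet_singleton k)
  have hφ_le_M : ∀ n x, g (fhat n x) x ≤ M x := fun n x => le_ciSup (hbdd x) _
  -- abbreviations
  have habs_int : ∀ n k, Integrable (fun x => |g k x - ghat n k x|) := fun n k =>
    ((hg_int' k).sub (hghat_int n k)).abs
  -- pointwise key bound
  have hkey : ∀ n x, M x - g (fhat n x) x ≤ 2 * ∑ k, |g k x - ghat n k x| := by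
    intro n x
    obtain ⟨j, hj⟩ := Finite.exists_max (fun k : Fin K => g k x)
    have hMx : M x = g j x := le_antisymm (ciSup_le hj) (le_ciSup (hbdd x) j)
    have h1 : g j x - ghat n j x ≤ |g j x - ghat n j x| := le_abs_self _
    have h2 : ghat n j x ≤ ghat n (fhat n x) x := by
      rw [hfhat n x]
      exact le_ciSup (Set.Finite.bddAbove (Set.finite_range (fun k : Fin K => ghat n k x))) j
    have h3 : ghat n (fhat n x) x - g (fhat n x) x ≤ |g (fhat n x) x - ghat n (fhat n x) x| := by
      rw [abs_sub_comm]; exact le_abs_self _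
    have h4 : |g j x - ghat n j x| ≤ ∑ k, |g k x - ghat n k x| :=
      Finset.single_le_sum (f := fun k => |g k x - ghat n k x|)
        (fun k _ => abs_nonneg _) (Finset.mem_univ j)
    have h5 : |g (fhat n x) x - ghat n (fhat n x) x| ≤ ∑ k, |g k x - ghat n k x| :=
      Finset.single_le_sum (f := fun k => |g k x - ghat n k x|)
        (fun k _ => abs_nonneg _) (Finset.mem_univ (fhat n x))
    rw [hMx]
    linarith
  -- integrated bounds
  have hub : ∀ n, (∫ x, g (fhat n x) x) ≤ ∫ x, M x := fun n =>
    integral_mono (hφ_int n) hM_int (hφ_le_M n)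
  have hlb : ∀ n, (∫ x, M x) - 2 * ∑ k, (∫ x, |g k x - ghat n k x|) ≤
      ∫ x, g (fhat n x) x := by
    intro n
    have hmono : (∫ x, (M x - g (fhat n x) x)) ≤
        ∫ x, 2 * ∑ k, |g k x - ghat n k x| := by
      refine integral_mono (hM_int.sub (hφ_int n)) ?_ (hkey n)
      exact (integrable_finset_sum _ fun k _ => habs_int n k).const_mul 2
    rw [integral_sub hM_int (hφ_int n), integral_const_mul,
      integral_finset_sum _ (fun k _ => habs_int n k)] at hmono
    linarith
  -- limit of the error term
  have hc : Tendsto (fun n => ∑ k, ∫ x, |g k x - ghat n k x|) atTop (nhds 0) := by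
    have := tendsto_finset_sum (Finset.univ : Finset (Fin K)) fun k _ => hL1 k
    simpa using this
  have hlow : Tendsto (fun n => (∫ x, M x) - 2 * ∑ k, (∫ x, |g k x - ghat n k x|))
      atTop (nhds (∫ x, M x)) := by
    have := (hc.const_mul 2).const_sub (∫ x, M x)
    simpa using this
  have hmain : Tendsto (fun n => ∫ x, g (fhat n x) x) atTop (nhds (∫ x, M x)) :=
    tendsto_of_tendsto_of_tendsto_of_le_of_le hlow tendsto_const_nhds hlb hub
  exact (hmain.const_mul ((1 : ℝ) / K)).const_sub 1
end

section
/- Let K ≥ 1 and D ≥ 1 be integers and let g_1, …, g_K : ℝ^D → ℝ be nonnegative measurable functions with ∫ g_k = 1 for each k. For each n ∈ ℕ let ĝ_{1,n}, …, ĝ_{K,n} : ℝ^D → ℝ be nonnegative measurable functions with ∫ ĝ_{k,n} = 1 for each k, and let f̂_n : ℝ^D → {1,…,K} be a measurable classifier with ĝ_{f̂_n(x),n}(x) = max_{1≤k≤K} ĝ_{k,n}(x) for every x. If for each k, ĝ_{k,n}(x) → g_k(x) as n → ∞ for Lebesgue-almost every x ∈ ℝ^D, then R(f̂_n) → R* as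 n → ∞. -/
open MeasureTheory Filter

/-- if the estimated densities (each integrating to 1) converge
Lebesgue-almost everywhere pointwise to the true densities, then the risk of
the plug-in classifiers converges to the Bayes risk: `R(f̂_n) → R*`. -/
theorem plugin_risk_tendsto_of_ae_pointwise {K D : ℕ} (hK : 1 ≤ K) (hD : 1 ≤ D)
    (g : Fin K → EuclideanSpace ℝ (Fin D) → ℝ)
    (hg_meas : ∀ k, Measurable (g k))
    (hg_nonneg : ∀ k x, 0 ≤ g k x)
    (hg_int : ∀ k, ∫ x, g k x = 1)
    (ghat : ℕ → Fin K → EuclideanSpace ℝ (Fin D) → ℝ)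
    (hghat_meas : ∀ n k, Measurable (ghat n k))
    (hghat_nonneg : ∀ n k x, 0 ≤ ghat n k x)
    (hghat_int : ∀ n k, ∫ x, ghat n k x = 1)
    (fhat : ℕ → EuclideanSpace ℝ (Fin D) → Fin K)
    (hfhat_meas : ∀ n, Measurable (fhat n))
    (hfhat : ∀ n x, ghat n (fhat n x) x = ⨆ k, ghat n k x)
    (hae : ∀ k, ∀ᵐ x : EuclideanSpace ℝ (Fin D),
      Tendsto (fun n => ghat n k x) atTop (nhds (g k x))) :
    Tendsto (fun n => 1 - (1 / K : ℝ) * ∫ x, g (fhat n x) x) atTop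
      (nhds (1 - (1 / K : ℝ) * ∫ x, ⨆ k, g k x)) := by
  classical
  haveI : Nonempty (Fin K) := ⟨⟨0, hK⟩⟩
  -- integrability of the true and estimated densities
  have hgI : ∀ k, Integrable (g k) := by
    intro k
    by_contra h
    have := hg_int k
    rw [integral_undef h] at this
    norm_num at this
  have hghatI : ∀ n k, Integrable (ghat n k) := by
    intro n k
    by_contra h
    have := hghat_int n k
    rw [integral_undef h] at this
    norm_num at this
  -- Scheffé's lemma: L¹ convergence of each estimated density
  have hL1 : ∀ k, Tendsto (fun n => ∫ x, |ghat n k x - g k x|) atTop (nhds 0) := by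
    intro k
    set p : ℕ → EuclideanSpace ℝ (Fin D) → ℝ := fun n x => max (g k x - ghat n k x) 0 with hp
    have hpI : ∀ n, Integrable (p n) := fun n => ((hgI k).sub (hghatI n k)).pos_part
    have hp_tend : Tendsto (fun n => ∫ x, p n x) atTop (nhds 0) := by
      have h0 : (0 : ℝ) = ∫ (_ : EuclideanSpace ℝ (Fin D)), (0 : ℝ) := by simp
      rw [h0]
      apply tendsto_integral_of_dominated_convergence (g k)
      · exact fun n => (((hg_meas k).sub (hghat_meas n k)).max measurable_const).aestronglyMeasurable
      · exact hgI k
      · intro n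
        filter_upwards with x
        have h1 : (0:ℝ) ≤ p n x := le_max_right _ _
        rw [Real.norm_eq_abs, abs_of_nonneg h1]
        exact max_le (by linarith [hghat_nonneg n k x]) (hg_nonneg k x)
      · filter_upwards [hae k] with x hx
        have : Tendsto (fun n => max (g k x - ghat n k x) 0) atTop
            (nhds (max (g k x - g k x) 0)) := ((tendsto_const_nhds.sub hx).max tendsto_const_nhds)
        simpa using this
    have key : ∀ n, ∫ x, |ghat n k x - g k x| = 2 * ∫ x, p n x := by
      intro n
      have h1 : ∀ x, |ghat n k x - g k x| = 2 * p n x + (ghat n k x - g k x) := by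
        intro x
        rcases le_total (ghat n k x) (g k x) with h | h
        · rw [hp]
          simp only
          rw [max_eq_left (by linarith), abs_of_nonpos (by linarith)]
          ring
        · rw [hp]
          simp only
          rw [max_eq_right (by linarith), abs_of_nonneg (by linarith)]
          ring
      calc ∫ x, |ghat n k x - g k x|
          = ∫ x, (2 * p n x + (ghat n k x - g k x)) := by simp_rw [h1]
        _ = (2 * ∫ x, p n x) + ((∫ x, ghat n k x) - ∫ x, g k x) := by
            have hA : Integrable (fun x => 2 * p n x) := (hpI n).const_mul 2
            have hB : Integrable (fun x => ghat n k x - g k x) := (hghatI n k).sub (hgI k)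
            rw [integral_add hA hB, integral_const_mul, integral_sub (hghatI n k) (hgI k)]
        _ = 2 * ∫ x, p n x := by rw [hghat_int n k, hg_int k]; ring
    simp_rw [key]
    have := hp_tend.const_mul (2:ℝ)
    simpa using this
  have hS : Tendsto (fun n => ∑ k, ∫ x, |ghat n k x - g k x|) atTop (nhds 0) := by
    have := tendsto_finset_sum Finset.univ (fun k (_ : k ∈ Finset.univ) => hL1 k)
    simpa using this
  -- measurability / integrability of sup and plug-in composition
  have hbdd : ∀ (h : Fin K → ℝ), BddAbove (Set.range h) := fun h => (Set.finite_range h).bddAbove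
  have hle_sup : ∀ (x) (j : Fin K), g j x ≤ ⨆ k, g k x := fun x j => le_ciSup (f := fun k => g k x) (hbdd _) j
  have hsup_meas : Measurable (fun x => ⨆ k, g k x) := Measurable.iSup hg_meas
  have habsI : ∀ n k, Integrable (fun x => |ghat n k x - g k x|) :=
    fun n k => ((hghatI n k).sub (hgI k)).abs
  have hsumI : Integrable (fun x => ∑ k, g k x) :=
    integrable_finset_sum _ (fun k _ => hgI k)
  have hsup_le_sum : ∀ x, (⨆ k, g k x) ≤ ∑ k, g k x := by
    intro x
    exact ciSup_le fun j => Finset.single_le_sum (fun k _ => hg_nonneg k x) (Finset.mem_univ j)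
  have hsupI : Integrable (fun x => ⨆ k, g k x) := by
    apply hsumI.mono' hsup_meas.aestronglyMeasurable
    filter_upwards with x
    rw [Real.norm_eq_abs, abs_of_nonneg (le_trans (hg_nonneg ⟨0, hK⟩ x) (hle_sup x ⟨0, hK⟩))]
    exact hsup_le_sum x
  have hcomp_meas : ∀ n, Measurable (fun x => g (fhat n x) x) := by
    intro n
    have heq : (fun x => g (fhat n x) x) =
        fun x => ∑ k, if fhat n x = k then g k x else 0 := by
      funext x
      simp [Finset.sum_ite_eq]
    rw [heq]
    apply Finset.measurable_sum
    intro k _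
    exact Measurable.ite (hfhat_meas n (measurableSet_singleton k)) (hg_meas k) measurable_const
  have hcompI : ∀ n, Integrable (fun x => g (fhat n x) x) := by
    intro n
    apply hsupI.mono' (hcomp_meas n).aestronglyMeasurable
    filter_upwards with x
    rw [Real.norm_eq_abs, abs_of_nonneg (hg_nonneg _ x)]
    exact hle_sup x _
  -- pointwise excess-risk bound
  have hpt : ∀ n x, (⨆ k, g k x) - g (fhat n x) x ≤ 2 * ∑ k, |ghat n k x - g k x| := by
    intro n x
    set S := ∑ k, |ghat n k x - g k x| with hSdef
    have hterm : ∀ j : Fin K, |ghat n j x - g j x| ≤ S :=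
      fun j => Finset.single_le_sum (f := fun k => |ghat n k x - g k x|)
        (fun k _ => abs_nonneg _) (Finset.mem_univ j)
    have h1 : (⨆ k, g k x) ≤ ghat n (fhat n x) x + S := by
      apply ciSup_le
      intro j
      have h2 : g j x ≤ ghat n j x + |ghat n j x - g j x| := by
        have := abs_sub_abs_le_abs_sub (g j x) (ghat n j x)
        have := neg_abs_le (ghat n j x - g j x)
        linarith [neg_abs_le (ghat n j x - g j x)]
      have h3 : ghat n j x ≤ ghat n (fhat n x) x := by
        rw [hfhat n x]
        exact le_ciSup (f := fun k => ghat n k x) (hbdd _) j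
      linarith [hterm j]
    have h4 : ghat n (fhat n x) x ≤ g (fhat n x) x + S := by
      have := le_abs_self (ghat n (fhat n x) x - g (fhat n x) x)
      linarith [hterm (fhat n x)]
    linarith
  -- integral bounds
  have hIle : ∀ n, (∫ x, g (fhat n x) x) ≤ ∫ x, ⨆ k, g k x :=
    fun n => integral_mono (hcompI n) hsupI (fun x => hle_sup x _)
  have hIge : ∀ n, (∫ x, ⨆ k, g k x) - (∫ x, g (fhat n x) x)
      ≤ 2 * ∑ k, ∫ x, |ghat n k x - g k x| := by
    intro n
    rw [← integral_sub hsupI (hcompI n)]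
    calc (∫ x, ((⨆ k, g k x) - g (fhat n x) x))
        ≤ ∫ x, 2 * ∑ k, |ghat n k x - g k x| := by
          apply integral_mono (hsupI.sub (hcompI n))
            ((integrable_finset_sum _ (fun k _ => habsI n k)).const_mul 2) (hpt n)
      _ = 2 * ∑ k, ∫ x, |ghat n k x - g k x| := by
          rw [integral_const_mul, integral_finset_sum _ (fun k _ => habsI n k)]
  -- squeeze
  have hmain : Tendsto (fun n => ∫ x, g (fhat n x) x) atTop (nhds (∫ x, ⨆ k, g k x)) := by
    apply tendsto_of_tendsto_of_tendsto_of_le_of_le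
      (g := fun n => (∫ x, ⨆ k, g k x) - 2 * ∑ k, ∫ x, |ghat n k x - g k x|)
      (h := fun _ => ∫ x, ⨆ k, g k x)
    · have h := Tendsto.const_sub (∫ x, ⨆ k, g k x) (Tendsto.const_mul (2:ℝ) hS)
      simpa using h
    · exact tendsto_const_nhds
    · intro n
      simp only
      have := hIge n
      linarith
    · exact hIle
  exact tendsto_const_nhds.sub (Tendsto.const_mul _ hmain)
end

section
/- Fix integers K ≥ 1, D ≥ 1 and 0 ≤ d ≤ D, and reals α > 0, M > 0. Let u_1, …, u_K ∈ ℝ^D and let P_1, …, P_K be orthogonal projections of ℝ^D of rank d, and let the class-conditional densities be g_k = g_{u_k,P_k} with uniform priors π_k = 1/K. Let (Ω, 𝔽, ℙ) be a probability space and, for each n ∈ ℕ and class k, let û_{k,n} : Ω → ℝ^D and P̂_{k,n} : Ω → (rank-d orthogonal projections of ℝ^D) be random estimators such that, almost surely, û_{k,n} → u_k and P̂_{k,n} → P_k as n → ∞ for every k. For each ω and n let f̂_n^ω : ℝ^D → {1,…,K} be a measurable classifier with g_{û_{k,n}(ω),P̂_{k,n}(ω)} evaluated at x maximal at k = f̂_n^ω(x)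 for every x. Then almost surely R(f̂_n^ω) → R* as n → ∞. -/
open MeasureTheory Filter
open scoped RealInnerProductSpace ProbabilityTheory

/-- The NSS model density `g_{u,P}(x) = c · 𝟙_{‖P(x−u)‖ ≤ M} · exp(−α‖(x−u) − P(x−u)‖²)`,
with `c = (vol_d(M) · (π/α)^{(D−d)/2})⁻¹` and `vol_d(M) = π^{d/2} M^d / Γ(d/2 + 1)`. -/
noncomputable def modelDensity {D : ℕ} (d : ℕ) (α M : ℝ)
    (u : EuclideanSpace ℝ (Fin D))
    (P : EuclideanSpace ℝ (Fin D) →L[ℝ] EuclideanSpace ℝ (Fin D))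
    (x : EuclideanSpace ℝ (Fin D)) : ℝ :=
  ((Real.pi ^ ((d : ℝ) / 2) * M ^ d / Real.Gamma ((d : ℝ) / 2 + 1)) *
      (Real.pi / α) ^ (((D : ℝ) - (d : ℝ)) / 2))⁻¹ *
    (if ‖P (x - u)‖ ≤ M then Real.exp (-α * ‖(x - u) - P (x - u)‖ ^ 2) else 0)

open Module Topology

/-!
For almost every `ω` the estimated parameters converge, and `g_{u,P}(x)` depends continuously on
`(u, P)` off the set `‖P (x - u)‖ = M`, which is Lebesgue-null as part of the frontier of a convex
set. Every `g_{û,P̂}` has the same total mass as `g_{u,P}`, because some isometry of `ℝ^D`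
conjugates any two orthogonal projections of equal rank. Scheffé's lemma therefore turns pointwise
convergence into `L¹` convergence `ĝ_k → g_k`. Since `f̂(x)` maximises `ĝ_k(x)`, the gap
`max_k g_k(x) - g_{f̂(x)}(x)` is at most `2 ∑_k |ĝ_k(x) - g_k(x)|`, so the plug-in risk converges
to the Bayes risk.
-/

section
variable {𝕜 E : Type*} [RCLike 𝕜] [NormedAddCommGroup E] [InnerProductSpace 𝕜 E]
  [FiniteDimensional 𝕜 E]

theorem Submodule.exists_linearIsometryEquiv_map_eq {S T : Submodule 𝕜 E}
    (h : finrank 𝕜 S = finrank 𝕜 T) :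
    ∃ e : E ≃ₗᵢ[𝕜] E, S.map (e.toLinearEquiv : E →ₗ[𝕜] E) = T := by
  let φ : S ≃ₗᵢ[𝕜] T := (stdOrthonormalBasis 𝕜 S).equiv (stdOrthonormalBasis 𝕜 T) (finCongr h)
  let f : E →ₗᵢ[𝕜] E := (T.subtypeₗᵢ.comp φ.toLinearIsometry).extend
  have hf : ∀ s : S, f s = φ s := fun s => LinearIsometry.extend_apply _ s
  refine ⟨f.toLinearIsometryEquiv rfl, le_antisymm ?_ fun y hy => ?_⟩
  · rintro _ ⟨x, hx, rfl⟩
    exact (hf ⟨x, hx⟩).symm ▸ (φ ⟨x, hx⟩).2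
  · refine ⟨φ.symm ⟨y, hy⟩, (φ.symm ⟨y, hy⟩).2, ?_⟩
    simp [hf]

theorem Submodule.exists_linearIsometryEquiv_starProjection_comm {S T : Submodule 𝕜 E}
    (h : finrank 𝕜 S = finrank 𝕜 T) :
    ∃ e : E ≃ₗᵢ[𝕜] E, ∀ x, T.starProjection (e x) = e (S.starProjection x) := by
  obtain ⟨e, rfl⟩ := S.exists_linearIsometryEquiv_map_eq h
  exact ⟨e, fun x => by simp [Submodule.starProjection_map_apply]⟩

end

section
variable {E : Type*} [NormedAddCommGroup E] [MeasurableSpace E] [BorelSpace E]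

theorem integrable_exp_neg_mul_sq_norm [InnerProductSpace ℝ E] [FiniteDimensional ℝ E]
    {b : ℝ} (hb : 0 < b) :
    Integrable fun x : E => Real.exp (-b * ‖x‖ ^ 2) :=
  Integrable.of_integral_ne_zero <| by
    rw [GaussianFourier.integral_rexp_neg_mul_sq_norm hb]; positivity

theorem ae_norm_map_sub_ne [NormedSpace ℝ E] [FiniteDimensional ℝ E] {F : Type*}
    [NormedAddCommGroup F] [NormedSpace ℝ F] (μ : Measure E) [μ.IsAddHaarMeasure]
    (P : E →L[ℝ] F) (u : E) {M : ℝ} (hM : 0 < M) : ∀ᵐ x ∂μ, ‖P (x - u)‖ ≠ M := by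
  set s := {x | ‖P (x - u)‖ ≤ M}
  have hs : Convex ℝ s := by
    convert ((convex_closedBall (0 : F) M).linear_preimage
      (P : E →ₗ[ℝ] F)).translate_preimage_left (-u) using 1
    ext x; simp [s, sub_eq_add_neg]
  rw [ae_iff]
  refine measure_mono_null (fun x hx => ?_) (hs.addHaar_frontier μ)
  rw [Set.mem_ofPred_eq, not_ne_iff] at hx
  -- `x` is in the frontier of `s`: moving from `x` away from `u` leaves `s` at once.
  refine ⟨subset_closure hx.le, fun hx_int => ?_⟩
  have hray : Tendsto (fun t : ℝ => x + t • (x - u)) (𝓝[>] 0) (𝓝 x) :=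
    (Continuous.tendsto' (f := fun t : ℝ => x + t • (x - u)) (by fun_prop) 0 x
      (by simp)).mono_left nhdsWithin_le_nhds
  obtain ⟨t, (hts : ‖P (x + t • (x - u) - u)‖ ≤ M), (ht : 0 < t)⟩ :=
    ((hray.eventually (mem_interior_iff_mem_nhds.1 hx_int)).and self_mem_nhdsWithin).exists
  have : ‖P (x + t • (x - u) - u)‖ = (1 + t) * M := by
    rw [show x + t • (x - u) - u = (1 + t) • (x - u) by module, map_smul, norm_smul, hx,
      Real.norm_of_nonneg (by linarith)]
  nlinarith

end

section
variable {X : Type*} [MeasurableSpace X] {μ : Measure X}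

theorem tendsto_integral_abs_sub_of_tendsto_ae {f : ℕ → X → ℝ} {g : X → ℝ}
    (hf : ∀ n, Integrable (f n) μ) (hg : Integrable g μ) (hf0 : ∀ n, 0 ≤ᵐ[μ] f n)
    (hfg : ∀ᵐ x ∂μ, Tendsto (fun n => f n x) atTop (𝓝 (g x)))
    (hint : ∀ n, ∫ x, f n x ∂μ = ∫ x, g x ∂μ) :
    Tendsto (fun n => ∫ x, |f n x - g x| ∂μ) atTop (𝓝 0) := by
  -- Since `∫ (f n - g) = 0`, the `L¹` distance is twice the integral of the negative part.
  have hpos : Tendsto (fun n => ∫ x, max (g x - f n x) 0 ∂μ) atTop (𝓝 (∫ _, (0 : ℝ) ∂μ)) := by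
    refine tendsto_integral_of_dominated_convergence (fun x => |g x|)
      (fun n => ((hg.sub (hf n)).pos_part).aestronglyMeasurable) hg.abs (fun n => ?_) ?_
    · filter_upwards [hf0 n] with x (hx : 0 ≤ f n x)
      rw [Real.norm_of_nonneg (le_max_right _ _)]
      exact max_le (by linarith [le_abs_self (g x)]) (abs_nonneg _)
    · filter_upwards [hfg] with x hx
      simpa using ((tendsto_const_nhds.sub hx).max tendsto_const_nhds : Tendsto
        (fun n => max (g x - f n x) 0) atTop (𝓝 (max (g x - g x) 0)))
  have hsplit : ∀ n, ∫ x, |f n x - g x| ∂μ = 2 * ∫ x, max (g x - f n x) 0 ∂μ := fun n => by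
    have habs : ∀ x, |f n x - g x| = (f n x - g x) + 2 * max (g x - f n x) 0 := fun x => by
      rcases le_total (f n x) (g x) with h | h
      · rw [abs_of_nonpos (by linarith), max_eq_left (by linarith)]; ring
      · rw [abs_of_nonneg (by linarith), max_eq_right (by linarith)]; ring
    simp_rw [habs]
    rw [integral_add (f := fun x => f n x - g x) (g := fun x => 2 * max (g x - f n x) 0)
        ((hf n).sub hg) (((hg.sub (hf n)).pos_part).const_mul 2),
      integral_sub (hf n) hg, hint n, integral_const_mul, sub_self, zero_add]
  simpa [hsplit] using hpos.const_mul 2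

end

section
variable {X ι : Type*} [MeasurableSpace X] {μ : Measure X} [Fintype ι]

theorem abs_iSup_le_sum_abs (a : ι → ℝ) : |⨆ k, a k| ≤ ∑ k, |a k| := by
  cases isEmpty_or_nonempty ι
  · simp
  · obtain ⟨j, hj⟩ := exists_eq_ciSup_of_finite (f := a)
    rw [← hj]
    exact Finset.single_le_sum (f := fun k => |a k|) (fun k _ => abs_nonneg _) (Finset.mem_univ j)

theorem iSup_sub_le_two_mul_sum_abs_sub {a b : ι → ℝ} {j : ι} (hj : b j = ⨆ k, b k) :
    (⨆ k, a k) - a j ≤ 2 * ∑ k, |b k - a k| := by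
  have : Nonempty ι := ⟨j⟩
  obtain ⟨i, hi⟩ := exists_eq_ciSup_of_finite (f := a)
  have hbi : b i ≤ b j := hj ▸ le_ciSup (Finite.bddAbove_range b) i
  have hsum : ∀ k, |b k - a k| ≤ ∑ k, |b k - a k| := fun k =>
    Finset.single_le_sum (f := fun k => |b k - a k|) (fun k _ => abs_nonneg _) (Finset.mem_univ k)
  rw [← hi]
  linarith [hsum i, hsum j, neg_abs_le (b i - a i), le_abs_self (b j - a j)]

theorem integrable_iSup {g : ι → X → ℝ} (hg : ∀ k, Integrable (g k) μ) :
    Integrable (fun x => ⨆ k, g k x) μ :=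
  (integrable_finsetSum _ fun k _ => (hg k).abs).mono'
    (AEMeasurable.iSup fun k => (hg k).aemeasurable).aestronglyMeasurable
    (ae_of_all _ fun _ => abs_iSup_le_sum_abs _)

theorem integrable_apply_of_measurable [MeasurableSpace ι] [MeasurableSingletonClass ι]
    {g : ι → X → ℝ} (hg : ∀ k, Integrable (g k) μ) {f : X → ι} (hf : Measurable f) :
    Integrable (fun x => g (f x) x) μ := by
  have hsum : (fun x => g (f x) x) = fun x => ∑ k, {x | f x = k}.indicator (g k) x := by
    ext x
    rw [Finset.sum_eq_single_of_mem (f x) (Finset.mem_univ _)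
      fun k _ hk => Set.indicator_of_notMem (fun h => hk h.symm) (g k)]
    exact (Set.indicator_of_mem (s := {y | f y = f x}) rfl (g (f x))).symm
  rw [hsum]
  exact integrable_finsetSum _ fun k _ =>
    (hg k).indicator (hf (measurableSet_singleton k))

variable [MeasurableSpace ι] [MeasurableSingletonClass ι]

theorem abs_integral_apply_sub_integral_iSup_le {g ĝ : ι → X → ℝ}
    (hg : ∀ k, Integrable (g k) μ) (hĝ : ∀ k, Integrable (ĝ k) μ) {f : X → ι}
    (hf : Measurable f) (hmax : ∀ x, ĝ (f x) x = ⨆ k, ĝ k x) :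
    |∫ x, g (f x) x ∂μ - ∫ x, ⨆ k, g k x ∂μ| ≤ 2 * ∑ k, ∫ x, |ĝ k x - g k x| ∂μ := by
  have hgf := integrable_apply_of_measurable hg hf
  have hle : ∫ x, g (f x) x ∂μ ≤ ∫ x, ⨆ k, g k x ∂μ :=
    integral_mono hgf (integrable_iSup hg) fun x =>
      le_ciSup (f := fun k => g k x) (Finite.bddAbove_range _) (f x)
  rw [abs_sub_comm, abs_of_nonneg (sub_nonneg.2 hle), ← integral_sub (integrable_iSup hg) hgf,
    ← integral_finsetSum (f := fun k x => |ĝ k x - g k x|) _ fun k _ => ((hĝ k).sub (hg k)).abs,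
    ← integral_const_mul]
  exact integral_mono ((integrable_iSup hg).sub hgf)
    ((integrable_finsetSum _ fun k _ => ((hĝ k).sub (hg k)).abs).const_mul 2)
    fun x => iSup_sub_le_two_mul_sum_abs_sub (hmax x)

theorem tendsto_integral_apply_iSup {g : ι → X → ℝ} {ĝ : ℕ → ι → X → ℝ} {f : ℕ → X → ι}
    (hg : ∀ k, Integrable (g k) μ) (hĝ : ∀ n k, Integrable (ĝ n k) μ)
    (hL1 : ∀ k, Tendsto (fun n => ∫ x, |ĝ n k x - g k x| ∂μ) atTop (𝓝 0))
    (hf : ∀ n, Measurable (f n)) (hmax : ∀ n x, ĝ n (f n x) x = ⨆ k, ĝ n k x) :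
    Tendsto (fun n => ∫ x, g (f n x) x ∂μ) atTop (𝓝 (∫ x, ⨆ k, g k x ∂μ)) := by
  rw [tendsto_iff_norm_sub_tendsto_zero]
  refine squeeze_zero (g := fun n => 2 * ∑ k, ∫ x, |ĝ n k x - g k x| ∂μ)
    (fun n => norm_nonneg _) (fun n => ?_) ?_
  · exact abs_integral_apply_sub_integral_iSup_le hg (hĝ n) (hf n) (hmax n)
  · simpa using (tendsto_finsetSum Finset.univ fun k _ => hL1 k).const_mul 2

end

section
variable {D d : ℕ} {α M : ℝ}

local notation "𝔼" n:max => EuclideanSpace ℝ (Fin n)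

theorem modelDensity_nonneg (hα : 0 ≤ α) (hM : 0 ≤ M) (u : 𝔼 D) (P : 𝔼 D →L[ℝ] 𝔼 D)
    (x : 𝔼 D) : 0 ≤ modelDensity d α M u P x := by
  unfold modelDensity; positivity

theorem integrable_modelDensity (hα : 0 < α) (u : 𝔼 D) (P : 𝔼 D →L[ℝ] 𝔼 D) :
    Integrable (modelDensity d α M u P) := by
  have hgauss : Integrable fun x : 𝔼 D =>
      Real.exp (α * M ^ 2) * Real.exp (-(α / 2) * ‖x - u‖ ^ 2) :=
    ((integrable_exp_neg_mul_sq_norm (half_pos hα)).comp_sub_right u).const_mul _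
  refine Integrable.const_mul (hgauss.mono' ?_ (ae_of_all _ fun x => ?_)) _
  · exact (Measurable.ite (measurableSet_le (by fun_prop) measurable_const) (by fun_prop)
      measurable_const).aestronglyMeasurable
  · set z := x - u
    split_ifs with hz
    · rw [Real.norm_of_nonneg (Real.exp_pos _).le, ← Real.exp_add]
      refine Real.exp_le_exp.2 ?_
      have hz' : ‖z‖ ^ 2 ≤ 2 * M ^ 2 + 2 * ‖z - P z‖ ^ 2 :=
        calc ‖z‖ ^ 2 ≤ (‖P z‖ + ‖z - P z‖) ^ 2 := by gcongr; exact norm_le_insert' z (P z)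
          _ ≤ 2 * ‖P z‖ ^ 2 + 2 * ‖z - P z‖ ^ 2 := by
            nlinarith [sq_nonneg (‖P z‖ - ‖z - P z‖)]
          _ ≤ 2 * M ^ 2 + 2 * ‖z - P z‖ ^ 2 := by gcongr
      nlinarith
    · rw [norm_zero]; positivity

theorem modelDensity_eq_modelDensity_zero_sub (u : 𝔼 D) (P : 𝔼 D →L[ℝ] 𝔼 D) (x : 𝔼 D) :
    modelDensity d α M u P x = modelDensity d α M 0 P (x - u) := by
  simp [modelDensity]

theorem modelDensity_zero_apply_of_comm (e : 𝔼 D ≃ₗᵢ[ℝ] 𝔼 D) {P Q : 𝔼 D →L[ℝ] 𝔼 D}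
    (hPQ : ∀ z, Q (e z) = e (P z)) (z : 𝔼 D) :
    modelDensity d α M 0 Q (e z) = modelDensity d α M 0 P z := by
  simp [modelDensity, hPQ, ← map_sub]

theorem integral_modelDensity_eq_of_finrank_eq {P Q : 𝔼 D →L[ℝ] 𝔼 D}
    (hP : (P : 𝔼 D →ₗ[ℝ] 𝔼 D).IsSymmetricProjection)
    (hQ : (Q : 𝔼 D →ₗ[ℝ] 𝔼 D).IsSymmetricProjection)
    (hrank : finrank ℝ (LinearMap.range (P : 𝔼 D →ₗ[ℝ] 𝔼 D)) =
      finrank ℝ (LinearMap.range (Q : 𝔼 D →ₗ[ℝ] 𝔼 D)))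
    (u v : 𝔼 D) :
    ∫ x, modelDensity d α M u P x = ∫ x, modelDensity d α M v Q x := by
  obtain ⟨e, he⟩ := Submodule.exists_linearIsometryEquiv_starProjection_comm hrank
  obtain ⟨_, hP⟩ := LinearMap.isSymmetricProjection_iff_eq_coe_starProjection_range.1 hP
  obtain ⟨_, hQ⟩ := LinearMap.isSymmetricProjection_iff_eq_coe_starProjection_range.1 hQ
  have hPQ : ∀ z, Q (e z) = e (P z) := fun z => by
    rw [show P z = _ from LinearMap.congr_fun hP z,
      show Q (e z) = _ from LinearMap.congr_fun hQ (e z)]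
    exact he z
  calc ∫ x, modelDensity d α M u P x = ∫ z, modelDensity d α M 0 P z := by
        simp_rw [modelDensity_eq_modelDensity_zero_sub u, integral_sub_right_eq_self]
    _ = ∫ z, modelDensity d α M 0 Q (e z) := by
        simp_rw [modelDensity_zero_apply_of_comm e hPQ]
    _ = ∫ x, modelDensity d α M v Q x := by
        rw [integral_comp e]
        simp_rw [modelDensity_eq_modelDensity_zero_sub v, integral_sub_right_eq_self]

theorem continuousAt_modelDensity_param {u x : 𝔼 D} {P : 𝔼 D →L[ℝ] 𝔼 D}
    (hx : ‖P (x - u)‖ ≠ M) :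
    ContinuousAt (fun p : 𝔼 D × (𝔼 D →L[ℝ] 𝔼 D) => modelDensity d α M p.1 p.2 x) (u, P) := by
  have hcont : Continuous fun p : 𝔼 D × (𝔼 D →L[ℝ] 𝔼 D) => p.2 (x - p.1) := by fun_prop
  refine continuousAt_const.mul ?_
  rcases hx.lt_or_gt with hlt | hgt
  · refine ContinuousAt.congr_of_eventuallyEq
      (f := fun p => Real.exp (-α * ‖(x - p.1) - p.2 (x - p.1)‖ ^ 2)) (by fun_prop) ?_
    filter_upwards [hcont.norm.continuousAt.eventually_lt continuousAt_const hlt] with p hp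
    rw [if_pos hp.le]
  · refine ContinuousAt.congr_of_eventuallyEq (f := fun _ => 0) continuousAt_const ?_
    filter_upwards [continuousAt_const.eventually_lt hcont.norm.continuousAt hgt] with p hp
    rw [if_neg hp.not_ge]

end

theorem nss_strong_consistency_general {Ω : Type*} [MeasureSpace Ω]
    {K D : ℕ} (d : ℕ)
    (α M : ℝ) (hα : 0 < α) (hM : 0 < M)
    (u : Fin K → EuclideanSpace ℝ (Fin D))
    (P : Fin K → EuclideanSpace ℝ (Fin D) →L[ℝ] EuclideanSpace ℝ (Fin D))
    (hP_idem : ∀ k, P k ∘L P k = P k)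
    (hP_symm : ∀ k, ∀ v w : EuclideanSpace ℝ (Fin D), ⟪P k v, w⟫ = ⟪v, P k w⟫)
    (hP_rank : ∀ k, Module.finrank ℝ
      (LinearMap.range (P k : EuclideanSpace ℝ (Fin D) →ₗ[ℝ] EuclideanSpace ℝ (Fin D))) = d)
    (uhat : ℕ → Fin K → Ω → EuclideanSpace ℝ (Fin D))
    (Phat : ℕ → Fin K → Ω → EuclideanSpace ℝ (Fin D) →L[ℝ] EuclideanSpace ℝ (Fin D))
    (hPhat_idem : ∀ n k ω, Phat n k ω ∘L Phat n k ω = Phat n k ω)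
    (hPhat_symm : ∀ n k ω, ∀ v w : EuclideanSpace ℝ (Fin D),
      ⟪Phat n k ω v, w⟫ = ⟪v, Phat n k ω w⟫)
    (hPhat_rank : ∀ n k ω, Module.finrank ℝ
      (LinearMap.range
        (Phat n k ω : EuclideanSpace ℝ (Fin D) →ₗ[ℝ] EuclideanSpace ℝ (Fin D))) = d)
    (hconv : ∀ᵐ ω : Ω, ∀ k,
      Tendsto (fun n => uhat n k ω) atTop (nhds (u k)) ∧
      Tendsto (fun n => Phat n k ω) atTop (nhds (P k)))
    (fhat : ℕ → Ω → EuclideanSpace ℝ (Fin D) → Fin K)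
    (hfhat_meas : ∀ n ω, Measurable (fhat n ω))
    (hfhat : ∀ n ω x,
      modelDensity d α M (uhat n (fhat n ω x) ω) (Phat n (fhat n ω x) ω) x =
        ⨆ k, modelDensity d α M (uhat n k ω) (Phat n k ω) x) :
    ∀ᵐ ω : Ω,
      Tendsto (fun n =>
          1 - (1 / K : ℝ) * ∫ x, modelDensity d α M (u (fhat n ω x)) (P (fhat n ω x)) x)
        atTop
        (nhds (1 - (1 / K : ℝ) * ∫ x, ⨆ k, modelDensity d α M (u k) (P k) x)) := by
  filter_upwards [hconv] with ω hω
  have hL1 : ∀ k, Tendsto (fun n => ∫ x, |modelDensity d α M (uhat n k ω) (Phat n k ω) x -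
      modelDensity d α M (u k) (P k) x|) atTop (𝓝 0) := fun k => by
    refine tendsto_integral_abs_sub_of_tendsto_ae
      (fun n => integrable_modelDensity hα (uhat n k ω) (Phat n k ω))
      (integrable_modelDensity hα (u k) (P k))
      (fun n => ae_of_all _ (modelDensity_nonneg hα.le hM.le _ _))
      ?_ fun n => integral_modelDensity_eq_of_finrank_eq
        ⟨ContinuousLinearMap.IsIdempotentElem.toLinearMap (hPhat_idem n k ω), hPhat_symm n k ω⟩
        ⟨ContinuousLinearMap.IsIdempotentElem.toLinearMap (hP_idem k), hP_symm k⟩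
        ((hPhat_rank n k ω).trans (hP_rank k).symm) _ _
    filter_upwards [ae_norm_map_sub_ne volume (P k) (u k) hM] with x hx
    -- elaborated without the expected type, whose unification would unfold `modelDensity`
    exact ((continuousAt_modelDensity_param hx).tendsto.comp ((hω k).1.prodMk_nhds (hω k).2) :)
  exact ((tendsto_integral_apply_iSup (fun k => integrable_modelDensity hα (u k) (P k))
    (fun n k => integrable_modelDensity hα (uhat n k ω) (Phat n k ω)) hL1
    (hfhat_meas · ω) (hfhat · ω)).const_mul _).const_sub 1

/-- strong consistency of the plug-in (nearest subspace) rule: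
if the parameter estimates `û_{k,n}, P̂_{k,n}` converge almost surely to the true
parameters `u_k, P_k`, then almost surely the risk of the plug-in classifiers `f̂_n^ω`
converges to the Bayes risk. -/
theorem nss_strong_consistency {Ω : Type*} [MeasureSpace Ω]
    [IsProbabilityMeasure (ℙ : Measure Ω)]
    {K D : ℕ} (hK : 1 ≤ K) (hD : 1 ≤ D) (d : ℕ) (hd : d ≤ D)
    (α M : ℝ) (hα : 0 < α) (hM : 0 < M)
    (u : Fin K → EuclideanSpace ℝ (Fin D))
    (P : Fin K → EuclideanSpace ℝ (Fin D) →L[ℝ] EuclideanSpace ℝ (Fin D))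
    (hP_idem : ∀ k, P k ∘L P k = P k)
    (hP_symm : ∀ k, ∀ v w : EuclideanSpace ℝ (Fin D), ⟪P k v, w⟫ = ⟪v, P k w⟫)
    (hP_rank : ∀ k, Module.finrank ℝ
      (LinearMap.range (P k : EuclideanSpace ℝ (Fin D) →ₗ[ℝ] EuclideanSpace ℝ (Fin D))) = d)
    (uhat : ℕ → Fin K → Ω → EuclideanSpace ℝ (Fin D))
    (Phat : ℕ → Fin K → Ω → EuclideanSpace ℝ (Fin D) →L[ℝ] EuclideanSpace ℝ (Fin D))
    (hPhat_idem : ∀ n k ω, Phat n k ω ∘L Phat n k ω = Phat n k ω)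
    (hPhat_symm : ∀ n k ω, ∀ v w : EuclideanSpace ℝ (Fin D),
      ⟪Phat n k ω v, w⟫ = ⟪v, Phat n k ω w⟫)
    (hPhat_rank : ∀ n k ω, Module.finrank ℝ
      (LinearMap.range
        (Phat n k ω : EuclideanSpace ℝ (Fin D) →ₗ[ℝ] EuclideanSpace ℝ (Fin D))) = d)
    (hconv : ∀ᵐ ω : Ω, ∀ k,
      Tendsto (fun n => uhat n k ω) atTop (nhds (u k)) ∧
      Tendsto (fun n => Phat n k ω) atTop (nhds (P k)))
    (fhat : ℕ → Ω → EuclideanSpace ℝ (Fin D) → Fin K)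
    (hfhat_meas : ∀ n ω, Measurable (fhat n ω))
    (hfhat : ∀ n ω x,
      modelDensity d α M (uhat n (fhat n ω x) ω) (Phat n (fhat n ω x) ω) x =
        ⨆ k, modelDensity d α M (uhat n k ω) (Phat n k ω) x) :
    ∀ᵐ ω : Ω,
      Tendsto (fun n =>
          1 - (1 / K : ℝ) * ∫ x, modelDensity d α M (u (fhat n ω x)) (P (fhat n ω x)) x)
        atTop
        (nhds (1 - (1 / K : ℝ) * ∫ x, ⨆ k, modelDensity d α M (u k) (P k) x)) :=
  nss_strong_consistency_general d α M hα hM u P hP_idem hP_symm hP_rank uhat Phat hPhat_idem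
    hPhat_symm hPhat_rank hconv fhat hfhat_meas hfhat
end
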